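/- Let 4/3 < α < 2, w ∈ ℝ, λ = λ₁ + iλ₂ with λ₂ > 0, C₂ > 0, and K > max{2^{1/2+1/α}, 1} satisfy ((2−α)/2) K^{−α} + C₂ α 2^{α+2} K^{−1} < α λ₂. Let T₁ > 1 and let v : [1,T₁] → ℂ satisfy the model ODE with remainder r, where |r(t)| ≤ C₂ 2^{α+2} K^α t^{−5/4+α/2} for all t ∈ [1,T₁]. Assume that |v(t)| < K t^{1/2−1/α} for all t ∈ [1, min(2,T₁)]. Then |v(t)| ≤ K t^{1/2−1/α} for all t ∈ [1,T₁]. -/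

import Mathlib

/-! Compare `‖v‖` with the barrier `b t = K t^p`, `p = 1/2 − 1/α`, through `‖v‖²` and `b²`.
Along the ODE, `⟪v, v′⟫ = −t^{−α/2} (λ₂ ‖v‖^{α+2} + Im (v̄ r))`. At a time `x` where
`‖v x‖ = b x`, after dividing by `b x` the damping term is `−λ₂ K^{α+1} x^{p−1}` and the
remainder contributes at most `C K^α x^{p−1}` because `1/α < 3/4`, while `b′ x = K p x^{p−1}`.
With `C = C₂ 2^{α+2}`, the condition on `K` is equivalent to `C K^α − λ₂ K^{α+1} < K p`,
so `‖v‖` cannot cross `b`. -/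

open Real Set

noncomputable section

/-- `v` satisfies the model ODE
`v′(t) = i (w v(t) + λ t^{−α/2} |v(t)|^α v(t) + t^{−α/2} r(t))`
with continuous remainder `r` on the set `I ⊆ [1,∞)`. -/
def SatisfiesModelODE (α w : ℝ) (lam : ℂ) (v r : ℝ → ℂ) (I : Set ℝ) : Prop :=
  ContinuousOn r I ∧
  ∀ t ∈ I, HasDerivWithinAt v
    (Complex.I * ((w : ℂ) * v t
      + lam * ((t ^ (-α / 2) : ℝ) : ℂ) * ((‖v t‖ ^ α : ℝ) : ℂ) * v t
      + ((t ^ (-α / 2) : ℝ) : ℂ) * r t)) I t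

theorem norm_le_of_barrier {F : Type*} [NormedAddCommGroup F] [InnerProductSpace ℝ F]
    {v v' : ℝ → F} {b b' : ℝ → ℝ} {a c : ℝ}
    (hv : ∀ x ∈ Icc a c, HasDerivWithinAt v (v' x) (Icc a c) x)
    (hb : ∀ x ∈ Icc a c, HasDerivWithinAt b (b' x) (Icc a c) x)
    (hb₀ : ∀ x ∈ Icc a c, 0 ≤ b x) (ha : ‖v a‖ ≤ b a)
    (bound : ∀ x ∈ Ico a c, ‖v x‖ = b x → inner ℝ (v x) (v' x) < b x * b' x) :
    ∀ x ∈ Icc a c, ‖v x‖ ≤ b x := by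
  have right_deriv {f : ℝ → ℝ} {f' : ℝ} {x : ℝ} (hx : x ∈ Ico a c)
      (h : HasDerivWithinAt f f' (Icc a c) x) : HasDerivWithinAt f f' (Ici x) x :=
    h.mono_of_mem_nhdsWithin (Icc_mem_nhdsGE_of_mem hx)
  have hvc : ContinuousOn v (Icc a c) := fun x hx => (hv x hx).continuousWithinAt
  have hbc : ContinuousOn b (Icc a c) := fun x hx => (hb x hx).continuousWithinAt
  have hsq := image_le_of_deriv_right_lt_deriv_boundary' (f := fun x => ‖v x‖ ^ 2)
    (B := fun x => b x ^ 2) (hvc.norm.pow 2)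
    (fun x hx => right_deriv hx (hv x (Ico_subset_Icc_self hx)).norm_sq)
    (pow_le_pow_left₀ (norm_nonneg _) ha 2)
    (hbc.pow 2)
    (fun x hx => right_deriv hx ((hb x (Ico_subset_Icc_self hx)).pow 2))
    (fun x hx hfx => by
      have hvb : ‖v x‖ = b x :=
        (pow_left_inj₀ (norm_nonneg _) (hb₀ x (Ico_subset_Icc_self hx)) two_ne_zero).1 hfx
      have := bound x hx hvb
      simp only [Nat.cast_ofNat, Nat.add_one_sub_one, pow_one]
      linarith)
  exact fun x hx => (pow_le_pow_iff_left₀ (norm_nonneg _) (hb₀ x hx) two_ne_zero).1 (hsq hx)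

def modelField (α w : ℝ) (lam : ℂ) (t : ℝ) (z ρ : ℂ) : ℂ :=
  Complex.I * ((w : ℂ) * z + lam * ((t ^ (-α / 2) : ℝ) : ℂ) * ((‖z‖ ^ α : ℝ) : ℂ) * z
    + ((t ^ (-α / 2) : ℝ) : ℂ) * ρ)

theorem inner_modelField (α w : ℝ) (lam : ℂ) (t : ℝ) (z ρ : ℂ) :
    inner ℝ z (modelField α w lam t z ρ) =
      -t ^ (-α / 2) * (lam.im * ‖z‖ ^ α * ‖z‖ ^ 2 + (starRingEnd ℂ z * ρ).im) := by
  rw [Complex.inner, modelField, Complex.sq_norm, Complex.normSq_apply]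
  simp only [Complex.mul_re, Complex.mul_im, Complex.add_re, Complex.add_im,
    Complex.I_re, Complex.I_im, Complex.ofReal_re, Complex.ofReal_im,
    Complex.conj_re, Complex.conj_im]
  ring

theorem inner_modelField_le (α w : ℝ) (lam : ℂ) {t : ℝ} (ht : 0 < t) (z ρ : ℂ) :
    inner ℝ z (modelField α w lam t z ρ) ≤
      t ^ (-α / 2) * (‖z‖ * ‖ρ‖ - lam.im * ‖z‖ ^ α * ‖z‖ ^ 2) := by
  have him : -(starRingEnd ℂ z * ρ).im ≤ ‖z‖ * ‖ρ‖ := by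
    simpa [norm_mul] using neg_le_of_abs_le (Complex.abs_im_le_norm (starRingEnd ℂ z * ρ))
  rw [inner_modelField]
  nlinarith [rpow_pos_of_pos ht (-α / 2)]

theorem barrier_constant_lt {α C K μ : ℝ} (hα : 0 < α) (hK : 0 < K)
    (h : (2 - α) / 2 * K ^ (-α) + C * α * K ^ (-1 : ℝ) < α * μ) :
    C * K ^ α - μ * K ^ α * K < K * (1 / 2 - 1 / α) := by
  rw [rpow_neg hK.le, rpow_neg_one] at h
  have hKα := rpow_pos_of_pos hK α
  have := mul_lt_mul_of_pos_right h (by positivity : 0 < K ^ α * K / α)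
  field_simp at this ⊢
  linarith

theorem inner_modelField_lt_at_barrier {α w C K x : ℝ} {lam z ρ : ℂ} (hα : 4 / 3 < α)
    (hC : 0 ≤ C) (hK : 0 < K)
    (hKcond : (2 - α) / 2 * K ^ (-α) + C * α * K ^ (-1 : ℝ) < α * lam.im) (hx : 1 ≤ x)
    (hz : ‖z‖ = K * x ^ ((1 : ℝ) / 2 - 1 / α))
    (hρ : ‖ρ‖ ≤ C * K ^ α * x ^ (-(5 : ℝ) / 4 + α / 2)) :
    inner ℝ z (modelField α w lam x z ρ) <
      K * x ^ ((1 : ℝ) / 2 - 1 / α) *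
        (K * ((1 / 2 - 1 / α) * x ^ ((1 : ℝ) / 2 - 1 / α - 1))) := by
  set p : ℝ := 1 / 2 - 1 / α
  have hα₀ : 0 < α := by linarith
  have hx₀ : 0 < x := by linarith
  have hz₀ : 0 < ‖z‖ := hz ▸ by positivity
  have hremainder : x ^ (-α / 2) * ‖ρ‖ ≤ C * K ^ α * x ^ (p - 1) :=
    calc x ^ (-α / 2) * ‖ρ‖ ≤ x ^ (-α / 2) * (C * K ^ α * x ^ (-(5 : ℝ) / 4 + α / 2)) := by
          gcongr
      _ = C * K ^ α * x ^ (-(5 : ℝ) / 4) := by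
          rw [mul_left_comm, ← rpow_add hx₀]; ring_nf
      _ ≤ C * K ^ α * x ^ (p - 1) := by
          gcongr
          have : 1 / α < 3 / 4 := by rw [div_lt_iff₀ hα₀]; linarith
          simp only [p]
          linarith
  have hnonlinear : x ^ (-α / 2) * (‖z‖ ^ α * ‖z‖) = K ^ α * K * x ^ (p - 1) := by
    rw [hz, mul_rpow hK.le (by positivity), ← rpow_mul hx₀.le,
      show x ^ (-α / 2) * (K ^ α * x ^ (p * α) * (K * x ^ p))
        = K ^ α * K * (x ^ (-α / 2) * x ^ (p * α) * x ^ p) by ring,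
      ← rpow_add hx₀, ← rpow_add hx₀]
    congr 2
    simp only [p]
    field_simp
    ring
  calc inner ℝ z (modelField α w lam x z ρ)
      ≤ x ^ (-α / 2) * (‖z‖ * ‖ρ‖ - lam.im * ‖z‖ ^ α * ‖z‖ ^ 2) :=
        inner_modelField_le α w lam hx₀ z ρ
    _ = ‖z‖ * (x ^ (-α / 2) * ‖ρ‖ - lam.im * (x ^ (-α / 2) * (‖z‖ ^ α * ‖z‖))) := by ring
    _ ≤ ‖z‖ * ((C * K ^ α - lam.im * K ^ α * K) * x ^ (p - 1)) := by
        rw [hnonlinear]; gcongr; linarith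
    _ < ‖z‖ * (K * p * x ^ (p - 1)) := by
        gcongr
        exact barrier_constant_lt hα₀ hK hKcond
    _ = K * x ^ p * (K * (p * x ^ (p - 1))) := by rw [hz]; ring

theorem bootstrap_estimate_general (α w : ℝ) (hα1 : 4 / 3 < α)
    (lam : ℂ)
    (C₂ K : ℝ) (hC₂ : 0 < C₂)
    (hK : max ((2 : ℝ) ^ ((1:ℝ)/2 + 1/α)) 1 < K)
    (hKcond : (2 - α) / 2 * K ^ (-α) + C₂ * α * (2 : ℝ) ^ (α + 2) * K ^ (-1 : ℝ)
      < α * lam.im)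
    (T₁ : ℝ) (v r : ℝ → ℂ)
    (hode : SatisfiesModelODE α w lam v r (Icc 1 T₁))
    (hr : ∀ t ∈ Icc (1:ℝ) T₁, ‖r t‖ ≤ C₂ * (2 : ℝ) ^ (α + 2) * K ^ α * t ^ (-(5:ℝ)/4 + α/2))
    (hsmall : ∀ t ∈ Icc (1:ℝ) (min 2 T₁), ‖v t‖ < K * t ^ ((1:ℝ)/2 - 1/α)) :
    ∀ t ∈ Icc (1:ℝ) T₁, ‖v t‖ ≤ K * t ^ ((1:ℝ)/2 - 1/α) := by
  intro t ht
  have hK₀ : 0 < K := zero_lt_one.trans_le (le_max_right _ _) |>.trans hK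
  have hv : ∀ x ∈ Icc 1 T₁,
      HasDerivWithinAt v (modelField α w lam x (v x) (r x)) (Icc 1 T₁) x := hode.2
  have hbarrier : ∀ x ∈ Icc (1 : ℝ) T₁,
      HasDerivWithinAt (fun x => K * x ^ ((1 : ℝ) / 2 - 1 / α))
        (K * ((1 / 2 - 1 / α) * x ^ ((1 : ℝ) / 2 - 1 / α - 1))) (Icc 1 T₁) x := fun x hx =>
    ((hasDerivAt_rpow_const (Or.inl (zero_lt_one.trans_le hx.1).ne')).const_mul K).hasDerivWithinAt
  have hstart : ‖v 1‖ ≤ K * (1 : ℝ) ^ ((1 : ℝ) / 2 - 1 / α) :=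
    (hsmall 1 ⟨le_rfl, le_min one_le_two (ht.1.trans ht.2)⟩).le
  refine norm_le_of_barrier hv hbarrier (fun x hx => by have := hx.1; positivity) hstart
    (fun x hx hvx => inner_modelField_lt_at_barrier hα1 (by positivity) hK₀ ?_ hx.1 hvx
      (hr x (Ico_subset_Icc_self hx))) t ht
  simpa only [mul_right_comm C₂ α] using hKcond

/-- Bootstrap lemma: under the largeness condition on `K`, if the
solution of the model ODE satisfies `|v(t)| < K t^{1/2−1/α}` for small times, then
`|v(t)| ≤ K t^{1/2−1/α}` on all of `[1,T₁]`. -/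
theorem bootstrap_estimate (α w : ℝ) (hα1 : 4 / 3 < α) (hα2 : α < 2)
    (lam : ℂ) (hlam : 0 < lam.im)
    (C₂ K : ℝ) (hC₂ : 0 < C₂)
    (hK : max ((2 : ℝ) ^ ((1:ℝ)/2 + 1/α)) 1 < K)
    (hKcond : (2 - α) / 2 * K ^ (-α) + C₂ * α * (2 : ℝ) ^ (α + 2) * K ^ (-1 : ℝ)
      < α * lam.im)
    (T₁ : ℝ) (hT₁ : 1 < T₁) (v r : ℝ → ℂ)
    (hode : SatisfiesModelODE α w lam v r (Icc 1 T₁))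
    (hr : ∀ t ∈ Icc (1:ℝ) T₁, ‖r t‖ ≤ C₂ * (2 : ℝ) ^ (α + 2) * K ^ α * t ^ (-(5:ℝ)/4 + α/2))
    (hsmall : ∀ t ∈ Icc (1:ℝ) (min 2 T₁), ‖v t‖ < K * t ^ ((1:ℝ)/2 - 1/α)) :
    ∀ t ∈ Icc (1:ℝ) T₁, ‖v t‖ ≤ K * t ^ ((1:ℝ)/2 - 1/α) :=
  bootstrap_estimate_general α w hα1 lam C₂ K hC₂ hK hKcond T₁ v r hode hr hsmall

end
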